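/- Let A : ℝ³ → ℝ³ and Φ : ℝ³ → ℝ be given in cylindrical coordinates by A¹ = xF₁(ρ) − yF₂(ρ), A² = yF₁(ρ) + xF₂(ρ), A³ = F₃(ρ), Φ = G(ρ), where ρ = √(x²+y²) and F₁,F₂,F₃,G are C¹ functions on (0,∞). Then along any solution of ẍⁱ = Σⱼ ẋʲ(∂ⱼAⁱ − ∂ᵢAʲ) − ∂ᵢΦ that avoids the z-axis, the quantities I₁ = ż + F₃(ρ) and I₂ = xẏ − yẋ + (x²+y²)F₂(ρ) are both constant in time. -/

import Mathlib

/-! The potentials do not depend on `z`, and `Φ`, `A³` are radial, so `z̈ = -F₃'(ρ) ρ̇` and the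
angular derivatives `x ∂_y - y ∂_x` of `Φ` and `A³` vanish. The `z`-component of `curl A` is
`2 F₂ + ρ F₂' = ρ⁻¹ d(ρ² F₂)/dρ`, so the torque `x ÿ - y ẍ` is `-d(ρ² F₂(ρ))/dt`. -/

/-- Partial derivative `∂ⱼ f (p)`, via the one-variable derivative along the `j`-th axis. -/
noncomputable def pd (j : Fin 3) (f : (Fin 3 → ℝ) → ℝ) (p : Fin 3 → ℝ) : ℝ :=
  deriv (fun s => f (Function.update p j s)) (p j)

/-- `ρ = √(x² + y²)`. -/
noncomputable def rho (p : Fin 3 → ℝ) : ℝ := Real.sqrt (p 0 ^ 2 + p 1 ^ 2)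

open Function

theorem rho_pos {p : Fin 3 → ℝ} (hp : 0 < p 0 ^ 2 + p 1 ^ 2) : 0 < rho p :=
  Real.sqrt_pos.2 hp

theorem rho_sq (p : Fin 3 → ℝ) : rho p ^ 2 = p 0 ^ 2 + p 1 ^ 2 :=
  Real.sq_sqrt (by positivity)

noncomputable def rhoDeriv (p w : Fin 3 → ℝ) : ℝ := (p 0 * w 0 + p 1 * w 1) / rho p

section Curve

variable {c : ℝ → Fin 3 → ℝ} {c' : Fin 3 → ℝ} {t : ℝ}

theorem hasDerivAt_rho_comp (hc : HasDerivAt c c' t) (hpos : 0 < c t 0 ^ 2 + c t 1 ^ 2) :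
    HasDerivAt (fun s => rho (c s)) (rhoDeriv (c t) c') t := by
  have hsq : HasDerivAt (fun s => c s 0 ^ 2 + c s 1 ^ 2)
      (2 * c t 0 * c' 0 + 2 * c t 1 * c' 1) t := by
    refine (((hasDerivAt_pi.1 hc 0).fun_pow 2).fun_add
      ((hasDerivAt_pi.1 hc 1).fun_pow 2)).congr_deriv ?_
    norm_num
  refine (hsq.sqrt hpos.ne').congr_deriv ?_
  have hρ : √(c t 0 ^ 2 + c t 1 ^ 2) ≠ 0 := (rho_pos hpos).ne'
  rw [rhoDeriv, rho]
  field_simp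

theorem hasDerivAt_comp_rho_comp {f : ℝ → ℝ} (hf : DifferentiableAt ℝ f (rho (c t)))
    (hc : HasDerivAt c c' t) (hpos : 0 < c t 0 ^ 2 + c t 1 ^ 2) :
    HasDerivAt (fun s => f (rho (c s))) (deriv f (rho (c t)) * rhoDeriv (c t) c') t :=
  hf.hasDerivAt.comp t (hasDerivAt_rho_comp hc hpos)

end Curve

theorem hasDerivAt_update_apply {ι : Type*} [Fintype ι] [DecidableEq ι] (p : ι → ℝ) (j k : ι) :
    HasDerivAt (fun s => update p j s k) ((Pi.single j 1 : ι → ℝ) k) (p j) :=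
  hasDerivAt_pi.1 (hasDerivAt_update p j (p j)) k

section Partial

variable {f : ℝ → ℝ} {p : Fin 3 → ℝ}

theorem hasDerivAt_comp_rho_update (hf : DifferentiableAt ℝ f (rho p))
    (hp : 0 < p 0 ^ 2 + p 1 ^ 2) (j : Fin 3) :
    HasDerivAt (fun s => f (rho (update p j s)))
      (deriv f (rho p) * rhoDeriv p (Pi.single j 1)) (p j) := by
  have h := hasDerivAt_comp_rho_comp (f := f) (c := update p j) (c' := Pi.single j 1) (t := p j)
  simp only [update_eq_self] at h
  exact h hf (hasDerivAt_update p j (p j)) hp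

theorem pd_comp_rho (hf : DifferentiableAt ℝ f (rho p)) (hp : 0 < p 0 ^ 2 + p 1 ^ 2)
    (j : Fin 3) :
    pd j (fun q => f (rho q)) p = deriv f (rho p) * rhoDeriv p (Pi.single j 1) :=
  (hasDerivAt_comp_rho_update hf hp j).deriv

theorem pd_eq_zero_of_update_eq {g : (Fin 3 → ℝ) → ℝ} {j : Fin 3}
    (h : ∀ s, g (update p j s) = g p) : pd j g p = 0 := by
  simp [pd, h]

theorem pd_two_comp_rho : pd 2 (fun q => f (rho q)) p = 0 :=
  pd_eq_zero_of_update_eq fun _ => by simp [rho]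

theorem angular_pd_comp_rho_eq_zero (hf : DifferentiableAt ℝ f (rho p))
    (hp : 0 < p 0 ^ 2 + p 1 ^ 2) :
    p 0 * pd 1 (fun q => f (rho q)) p - p 1 * pd 0 (fun q => f (rho q)) p = 0 := by
  simp only [pd_comp_rho hf hp, rhoDeriv, Pi.single_eq_same, ne_eq, one_ne_zero, zero_ne_one,
    not_false_eq_true, Pi.single_eq_of_ne]
  ring

end Partial

/-- `v × curl A - ∇Φ`, written out in coordinates. -/
noncomputable def lorentzForce (A : Fin 3 → (Fin 3 → ℝ) → ℝ) (Φ : (Fin 3 → ℝ) → ℝ)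
    (p v : Fin 3 → ℝ) (i : Fin 3) : ℝ :=
  (∑ j, v j * (pd i (A j) p - pd j (A i) p)) - pd i Φ p

section AxialField

variable {F₁ F₂ F₃ G : ℝ → ℝ} {A : Fin 3 → (Fin 3 → ℝ) → ℝ} {Φ : (Fin 3 → ℝ) → ℝ}
  {p : Fin 3 → ℝ}

theorem pd_two_A_zero_eq_zero (hA0 : ∀ p, A 0 p = p 0 * F₁ (rho p) - p 1 * F₂ (rho p)) :
    pd 2 (A 0) p = 0 :=
  pd_eq_zero_of_update_eq fun _ => by simp [hA0, rho]

theorem pd_two_A_one_eq_zero (hA1 : ∀ p, A 1 p = p 1 * F₁ (rho p) + p 0 * F₂ (rho p)) :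
    pd 2 (A 1) p = 0 :=
  pd_eq_zero_of_update_eq fun _ => by simp [hA1, rho]

theorem curl_A_two_eq (hA0 : ∀ p, A 0 p = p 0 * F₁ (rho p) - p 1 * F₂ (rho p))
    (hA1 : ∀ p, A 1 p = p 1 * F₁ (rho p) + p 0 * F₂ (rho p))
    (hF₁ : DifferentiableAt ℝ F₁ (rho p)) (hF₂ : DifferentiableAt ℝ F₂ (rho p))
    (hp : 0 < p 0 ^ 2 + p 1 ^ 2) :
    pd 0 (A 1) p - pd 1 (A 0) p = 2 * F₂ (rho p) + rho p * deriv F₂ (rho p) := by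
  have hA1_deriv :=
    ((hasDerivAt_update_apply p 0 1).fun_mul (hasDerivAt_comp_rho_update hF₁ hp 0)).fun_add
      ((hasDerivAt_update_apply p 0 0).fun_mul (hasDerivAt_comp_rho_update hF₂ hp 0))
  have hA0_deriv :=
    ((hasDerivAt_update_apply p 1 0).fun_mul (hasDerivAt_comp_rho_update hF₁ hp 1)).fun_sub
      ((hasDerivAt_update_apply p 1 1).fun_mul (hasDerivAt_comp_rho_update hF₂ hp 1))
  simp only [pd, hA0, hA1]
  rw [hA1_deriv.deriv, hA0_deriv.deriv]
  have hρ := (rho_pos hp).ne'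
  simp only [rhoDeriv, update_eq_self, Pi.single_eq_same, ne_eq, one_ne_zero, zero_ne_one,
    not_false_eq_true, Pi.single_eq_of_ne]
  field_simp
  linear_combination -deriv F₂ (rho p) * rho_sq p

theorem lorentzForce_two (hA0 : ∀ p, A 0 p = p 0 * F₁ (rho p) - p 1 * F₂ (rho p))
    (hA1 : ∀ p, A 1 p = p 1 * F₁ (rho p) + p 0 * F₂ (rho p))
    (hA2 : ∀ p, A 2 p = F₃ (rho p)) (hΦ : ∀ p, Φ p = G (rho p))
    (hF₃ : DifferentiableAt ℝ F₃ (rho p)) (hp : 0 < p 0 ^ 2 + p 1 ^ 2) (v : Fin 3 → ℝ) :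
    lorentzForce A Φ p v 2 = -(deriv F₃ (rho p) * rhoDeriv p v) := by
  simp only [lorentzForce, Fin.sum_univ_three, funext hA2, funext hΦ, pd_two_A_zero_eq_zero hA0,
    pd_two_A_one_eq_zero hA1, pd_two_comp_rho, pd_comp_rho hF₃ hp, rhoDeriv, Pi.single_eq_same,
    ne_eq, one_ne_zero, zero_ne_one, Fin.reduceEq, not_false_eq_true, Pi.single_eq_of_ne]
  ring

theorem lorentzForce_torque (hA0 : ∀ p, A 0 p = p 0 * F₁ (rho p) - p 1 * F₂ (rho p))
    (hA1 : ∀ p, A 1 p = p 1 * F₁ (rho p) + p 0 * F₂ (rho p))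
    (hA2 : ∀ p, A 2 p = F₃ (rho p)) (hΦ : ∀ p, Φ p = G (rho p))
    (hF₁ : DifferentiableAt ℝ F₁ (rho p)) (hF₂ : DifferentiableAt ℝ F₂ (rho p))
    (hF₃ : DifferentiableAt ℝ F₃ (rho p)) (hG : DifferentiableAt ℝ G (rho p))
    (hp : 0 < p 0 ^ 2 + p 1 ^ 2) (v : Fin 3 → ℝ) :
    p 0 * lorentzForce A Φ p v 1 - p 1 * lorentzForce A Φ p v 0 =
      -((2 * F₂ (rho p) + rho p * deriv F₂ (rho p)) * (p 0 * v 0 + p 1 * v 1)) := by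
  have hcurl := curl_A_two_eq hA0 hA1 hF₁ hF₂ hp
  have hA2_angular := angular_pd_comp_rho_eq_zero hF₃ hp
  have hΦ_angular := angular_pd_comp_rho_eq_zero hG hp
  rw [← funext hA2] at hA2_angular
  rw [← funext hΦ] at hΦ_angular
  simp only [lorentzForce, Fin.sum_univ_three, pd_two_A_zero_eq_zero hA0,
    pd_two_A_one_eq_zero hA1]
  linear_combination -(p 0 * v 0 + p 1 * v 1) * hcurl + v 2 * hA2_angular - hΦ_angular

end AxialField

/-- For axially symmetric potentials `A¹ = xF₁(ρ) − yF₂(ρ)`, `A² = yF₁(ρ) + xF₂(ρ)`,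
`A³ = F₃(ρ)`, `Φ = G(ρ)`, the quantities `I₁ = ż + F₃(ρ)` and
`I₂ = xẏ − yẋ + (x²+y²)F₂(ρ)` are conserved along solutions of
`ẍⁱ = Σⱼ ẋʲ(∂ᵢAʲ − ∂ⱼAⁱ) − ∂ᵢΦ` avoiding the z-axis. -/
theorem stmt_10
    (F₁ F₂ F₃ G : ℝ → ℝ)
    (hF₁ : ∀ s, 0 < s → DifferentiableAt ℝ F₁ s)
    (hF₂ : ∀ s, 0 < s → DifferentiableAt ℝ F₂ s)
    (hF₃ : ∀ s, 0 < s → DifferentiableAt ℝ F₃ s)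
    (hG : ∀ s, 0 < s → DifferentiableAt ℝ G s)
    (A : Fin 3 → (Fin 3 → ℝ) → ℝ) (Φ : (Fin 3 → ℝ) → ℝ)
    (hA0 : ∀ p, A 0 p = p 0 * F₁ (rho p) - p 1 * F₂ (rho p))
    (hA1 : ∀ p, A 1 p = p 1 * F₁ (rho p) + p 0 * F₂ (rho p))
    (hA2 : ∀ p, A 2 p = F₃ (rho p))
    (hΦ : ∀ p, Φ p = G (rho p))
    (x v a : ℝ → Fin 3 → ℝ)
    (hx : ∀ t, HasDerivAt x (v t) t)
    (hv : ∀ t, HasDerivAt v (a t) t)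
    (haxis : ∀ t, 0 < (x t 0) ^ 2 + (x t 1) ^ 2)
    (ode : ∀ t i, a t i =
        (∑ j, v t j * (pd i (A j) (x t) - pd j (A i) (x t))) - pd i Φ (x t)) :
    ∀ t,
      HasDerivAt (fun s => v s 2 + F₃ (rho (x s))) 0 t ∧
      HasDerivAt (fun s => x s 0 * v s 1 - x s 1 * v s 0
          + ((x s 0) ^ 2 + (x s 1) ^ 2) * F₂ (rho (x s))) 0 t := by
  intro t
  have hp := haxis t
  have hr : 0 < rho (x t) := rho_pos hp
  have hxi := hasDerivAt_pi.1 (hx t)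
  have hvi := hasDerivAt_pi.1 (hv t)
  have hode : ∀ i, a t i = lorentzForce A Φ (x t) (v t) i := ode t
  constructor
  · refine ((hvi 2).add (hasDerivAt_comp_rho_comp (hF₃ _ hr) (hx t) hp)).congr_deriv ?_
    rw [hode, lorentzForce_two hA0 hA1 hA2 hΦ (hF₃ _ hr) hp]
    ring
  · have htorque := lorentzForce_torque hA0 hA1 hA2 hΦ (hF₁ _ hr) (hF₂ _ hr) (hF₃ _ hr)
      (hG _ hr) hp (v t)
    have hρ_sq := ((hxi 0).fun_pow 2).fun_add ((hxi 1).fun_pow 2)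
    refine ((((hxi 0).fun_mul (hvi 1)).fun_sub ((hxi 1).fun_mul (hvi 0))).fun_add
      (hρ_sq.fun_mul (hasDerivAt_comp_rho_comp (hF₂ _ hr) (hx t) hp))).congr_deriv ?_
    rw [hode, hode, ← rho_sq, rhoDeriv]
    field_simp
    linear_combination htorque
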